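/- Let H be a |w|-Hom-configuration. Then H is a left |w|-Riedtmann configuration if and only if there are at most |w| − 1 isolated vertices with no overarc. -/

import Mathlib

/-!
For admissible arcs, some `Ext^i` with `w ≤ i ≤ 0` is nonzero exactly when the arcs cross or
share an endpoint, so a `|w|`-Hom-configuration `H` is a maximal family of pairwise
noncrossing arcs without common endpoints. The isolated vertices without overarc are the
vertices covered by no arc of `H`. Between two cut points, a tiling argument shows that the
number of uncovered vertices is congruent to the length of the interval modulo `1 - w`.
Maximality then bounds the uncovered vertices by `|w|` (the first and the `(|w|+1)`-st would
bound an arc that could be added to `H`), and forces exactly `|w| - 1` of them just below any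
arc of `H`.

Call a nonzero `Ext^i` with `w < i ≤ 0` sharp. If there are `|w|` uncovered vertices, the arc
from the first of them to one past the last is admissible and receives no sharp `Ext` from
`H`. If there are fewer, then for an admissible `z` the same congruence, applied under the
shortest arc of `H` over `z.1` (or in all of `H`), yields a sharp `Ext` into `z` either from
that arc or from the arc reaching furthest right among those over `z.2`.
-/

/- Combinatorial model of the triangulated category `T_w` generated by a `w`-spherical
object (`w ≤ -1`), via `d`-admissible arcs of the ∞-gon, where `d = w - 1`,
`|d| = 1 - w`, `|w| = -w`. -/

namespace SphericalArcs

/-- An arc is a pair of integers `(t, u)`. -/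
abbrev Arc : Type := ℤ × ℤ

/-- `(t,u)` is a `d`-admissible arc: `t > u`, `t - u ≥ |d| - 1 = -w` and
`t - u ≡ -1 (mod |d|)`, i.e. `(1 - w) ∣ (t - u + 1)`. -/
def Adm (w : ℤ) (a : Arc) : Prop :=
  a.2 < a.1 ∧ -w ≤ a.1 - a.2 ∧ (1 - w) ∣ (a.1 - a.2 + 1)

/-- `k(t,u) = (t - u + 1) / |d|`. -/
def kk (w : ℤ) (a : Arc) : ℤ := (a.1 - a.2 + 1) / (1 - w)

/-- `c ∈ F⁺(a)`: `c = (x,y)` is `d`-admissible, `x = a.1 + i·d` for some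
`0 ≤ i ≤ k(a) - 1`, and `y ≤ a.2`. -/
def Fplus (w : ℤ) (a c : Arc) : Prop :=
  Adm w c ∧ (∃ i : ℤ, 0 ≤ i ∧ i ≤ kk w a - 1 ∧ c.1 = a.1 + i * (w - 1)) ∧ c.2 ≤ a.2

/-- `c ∈ F⁻(a)`: `c = (x,y)` is `d`-admissible, `y = a.2 - i·d` for some
`0 ≤ i ≤ k(a) - 1`, and `x ≥ a.1`. -/
def Fminus (w : ℤ) (a c : Arc) : Prop :=
  Adm w c ∧ (∃ i : ℤ, 0 ≤ i ∧ i ≤ kk w a - 1 ∧ c.2 = a.2 - i * (w - 1)) ∧ a.1 ≤ c.1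

/-- The Serre functor: `S(t,u) = (t - w, u - w)`. -/
def Serre (w : ℤ) (a : Arc) : Arc := (a.1 - w, a.2 - w)

/-- `Hom(a,c) ≠ 0` iff `c ∈ F⁺(a) ∪ F⁻(S(a))`. -/
def HomNe (w : ℤ) (a c : Arc) : Prop := Fplus w a c ∨ Fminus w (Serre w a) c

/-- `Ext^j(a,b) ≠ 0` iff `Hom(a, Σ^j b) ≠ 0`, where `Σ^j b = (b.1 - j, b.2 - j)`. -/
def ExtNe (w : ℤ) (j : ℤ) (a b : Arc) : Prop := HomNe w a (b.1 - j, b.2 - j)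

/-- Two arcs `(t,u)` and `(t',u')` cross if `u < u' < t < t'` or `u' < u < t' < t`. -/
def Cross (a b : Arc) : Prop :=
  (a.2 < b.2 ∧ b.2 < a.1 ∧ a.1 < b.1) ∨ (b.2 < a.2 ∧ a.2 < b.1 ∧ b.1 < a.1)

/-- Two arcs share a vertex if `{t,u} ∩ {t',u'} ≠ ∅`. -/
def ShareVertex (a b : Arc) : Prop :=
  a.1 = b.1 ∨ a.1 = b.2 ∨ a.2 = b.1 ∨ a.2 = b.2

/-- A `|w|`-Hom-configuration: a set `H` of `d`-admissible arcs such that a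
`d`-admissible arc `h` belongs to `H` iff `Ext^i(x,h) = 0` for every `x ∈ H` and
`i ∈ {w+1, …, -1}`, and `Ext^i(x,h) = 0` for every `x ∈ H \ {h}` and `i ∈ {0, w}`. -/
def IsHomConfig (w : ℤ) (H : Set Arc) : Prop :=
  (∀ h ∈ H, Adm w h) ∧
  ∀ h : Arc, Adm w h →
    (h ∈ H ↔
      (∀ x ∈ H, ∀ i : ℤ, w + 1 ≤ i → i ≤ -1 → ¬ ExtNe w i x h) ∧
      (∀ x ∈ H, x ≠ h → ¬ ExtNe w 0 x h ∧ ¬ ExtNe w w x h))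

/-- `v` is an isolated vertex of `H`: it is not an endpoint of any arc of `H`. -/
def Isolated (H : Set Arc) (v : ℤ) : Prop := ∀ a ∈ H, a.1 ≠ v ∧ a.2 ≠ v

/-- `a ∈ H` is an overarc of `v`: `a.2 < v < a.1`. -/
def IsOverarc (H : Set Arc) (a : Arc) (v : ℤ) : Prop := a ∈ H ∧ a.2 < v ∧ v < a.1

/-- `a` is the smallest overarc of `v` in `H`. -/
def IsSmallestOverarc (H : Set Arc) (a : Arc) (v : ℤ) : Prop :=
  IsOverarc H a v ∧ ∀ b : Arc, IsOverarc H b v → b.2 ≤ a.2 ∧ a.1 ≤ b.1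

/-- The set of isolated vertices of `H` having no overarc in `H`. -/
def NoOverarcIsolated (H : Set Arc) : Set ℤ :=
  {v | Isolated H v ∧ ∀ a : Arc, ¬ IsOverarc H a v}

/-- A left `|w|`-Riedtmann configuration. -/
def IsLeftRiedtmann (w : ℤ) (C : Set Arc) : Prop :=
  (∀ c ∈ C, Adm w c) ∧
  (∀ x ∈ C, ∀ y ∈ C, x ≠ y → ∀ i : ℤ, w ≤ i → i ≤ 0 → ¬ ExtNe w i x y) ∧
  ∀ z : Arc, Adm w z → ∃ x ∈ C, ∃ i : ℤ, w + 1 ≤ i ∧ i ≤ 0 ∧ ExtNe w i x z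

/-- A right `|w|`-Riedtmann configuration. -/
def IsRightRiedtmann (w : ℤ) (C : Set Arc) : Prop :=
  (∀ c ∈ C, Adm w c) ∧
  (∀ x ∈ C, ∀ y ∈ C, x ≠ y → ∀ i : ℤ, w ≤ i → i ≤ 0 → ¬ ExtNe w i x y) ∧
  ∀ z : Arc, Adm w z → ∃ x ∈ C, ∃ i : ℤ, w + 1 ≤ i ∧ i ≤ 0 ∧ ExtNe w i z x

open Finset

variable {w : ℤ} {H G : Set Arc} {a b x y z : Arc}

theorem nonneg_of_dvd_of_neg_lt {m X : ℤ} (hd : m ∣ X) (h : -m < X) : 0 ≤ X := by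
  by_contra hX
  have := Int.le_of_dvd (by omega) (dvd_neg.2 hd)
  omega

theorem _root_.Finset.exists_card_filter_lt_eq {α : Type*} [LinearOrder α] (s : Finset α) {k : ℕ}
    (hk : k < #s) : ∃ x ∈ s, #(s.filter (· < x)) = k := by
  classical
  induction s using induction_on_max with
  | empty => simp at hk
  | insert a s hlt ih =>
    have ha : a ∉ s := fun h => lt_irrefl a (hlt a h)
    rw [card_insert_of_notMem ha] at hk
    rcases Nat.lt_succ_iff_lt_or_eq.1 hk with hk | rfl
    · obtain ⟨x, hx, hcard⟩ := ih hk
      refine ⟨x, mem_insert_of_mem hx, ?_⟩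
      rwa [filter_insert, if_neg (hlt x hx).not_gt]
    · refine ⟨a, mem_insert_self a s, ?_⟩
      rw [filter_insert, if_neg (lt_irrefl a), filter_true_of_mem hlt]

theorem adm_sub_iff (j : ℤ) : Adm w (a.1 - j, a.2 - j) ↔ Adm w a := by
  simp only [Adm, sub_sub_sub_cancel_right, sub_lt_sub_iff_right]

theorem kk_serre : kk w (Serre w a) = kk w a := by
  simp only [kk, Serre, sub_sub_sub_cancel_right]

/-- The cases are `Σ^i z ∈ F⁺(x)` and `Σ^i z ∈ F⁻(S x)`; `t` is the endpoint `z.1 - i`, resp.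
`z.2 - i + w`, which must lie on `x.1 - ℕ(1 - w)`, resp. `x.2 + ℕ(1 - w)`. -/
theorem extNe_iff {i : ℤ} (hw : w ≤ -1) (hx : Adm w x) (hz : Adm w z) :
    ExtNe w i x z ↔
      (∃ t, (1 - w) ∣ x.1 - t ∧ x.2 - w ≤ t ∧ t ≤ x.1 ∧ t - x.2 ≤ z.1 - z.2 ∧ i = z.1 - t) ∨
      (∃ t, (1 - w) ∣ t - x.2 ∧ x.2 ≤ t ∧ t ≤ x.1 + w ∧ x.1 - t ≤ z.1 - z.2 ∧
        i = z.2 - t + w) := by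
  obtain ⟨k, hk⟩ := hx.2.2
  have hm : 0 < 1 - w := by omega
  have hkk : kk w x = k := by rw [kk, hk, Int.mul_ediv_cancel_left _ hm.ne']
  simp only [ExtNe, HomNe, Fplus, Fminus, kk_serre]
  simp only [Serre, adm_sub_iff, hz, true_and, hkk]
  constructor
  · rintro (⟨⟨n, hn0, hnk, h1⟩, h2⟩ | ⟨⟨n, hn0, hnk, h1⟩, h2⟩)
    · exact Or.inl ⟨z.1 - i, ⟨n, by linarith⟩, by nlinarith, by nlinarith, by linarith, by ring⟩
    · exact Or.inr ⟨z.2 - i + w, ⟨n, by linarith⟩, by nlinarith, by nlinarith, by linarith,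
        by ring⟩
  · rintro (⟨t, ⟨n, hn⟩, h1, h2, h3, rfl⟩ | ⟨t, ⟨n, hn⟩, h1, h2, h3, rfl⟩)
    · exact Or.inl ⟨⟨n, by nlinarith, by nlinarith, by linarith⟩, by linarith⟩
    · exact Or.inr ⟨⟨n, by nlinarith, by nlinarith, by linarith⟩, by linarith⟩

def Compatible (a b : Arc) : Prop := ¬Cross a b ∧ ¬ShareVertex a b

theorem compatible_iff (ha : a.2 < a.1) (hb : b.2 < b.1) :
    Compatible a b ↔
      a.1 < b.2 ∨ b.1 < a.2 ∨ (a.2 < b.2 ∧ b.1 < a.1) ∨ (b.2 < a.2 ∧ a.1 < b.1) := by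
  simp only [Compatible, Cross, ShareVertex]
  omega

theorem not_compatible_iff (ha : a.2 < a.1) (hb : b.2 < b.1) :
    ¬Compatible a b ↔
      (b.2 ≤ a.2 ∧ a.2 ≤ b.1 ∧ b.1 ≤ a.1) ∨ (a.2 ≤ b.2 ∧ b.2 ≤ a.1 ∧ a.1 ≤ b.1) := by
  rw [compatible_iff ha hb]
  omega

theorem exists_extNe_of_meets_left (hw : w ≤ -1) (ha : Adm w a) (hb : Adm w b)
    (h₁ : b.2 ≤ a.2) (h₂ : a.2 ≤ b.1) (h₃ : b.1 ≤ a.1) :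
    ∃ i, w ≤ i ∧ i ≤ 0 ∧ ExtNe w i a b := by
  set r := (a.1 - b.1) % (1 - w)
  have hr₀ : 0 ≤ r := Int.emod_nonneg _ (by omega)
  have hr₁ : r < 1 - w := Int.emod_lt_of_pos _ (by omega)
  have hta : (1 - w) ∣ a.1 - (b.1 + r) := by
    convert (Int.dvd_self_sub_emod : (1 - w) ∣ a.1 - b.1 - r) using 1; ring
  refine ⟨-r, by omega, by omega, (extNe_iff hw ha hb).2 (Or.inl ⟨b.1 + r, hta, ?_, ?_, ?_, ?_⟩)⟩
  · have : (1 - w) ∣ b.1 + r - a.2 + w := by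
      convert Int.dvd_sub (Int.dvd_sub ha.2.2 hta) (Int.dvd_refl _) using 1; ring
    linarith [nonneg_of_dvd_of_neg_lt this (by omega)]
  · linarith [nonneg_of_dvd_of_neg_lt hta (by omega)]
  · have : (1 - w) ∣ b.1 - b.2 - (b.1 + r) + a.2 := by
      convert Int.dvd_add (Int.dvd_sub hb.2.2 ha.2.2) hta using 1; ring
    linarith [nonneg_of_dvd_of_neg_lt this (by omega)]
  · ring

theorem exists_extNe_of_meets_right (hw : w ≤ -1) (ha : Adm w a) (hb : Adm w b)
    (h₁ : a.2 ≤ b.2) (h₂ : b.2 ≤ a.1) (h₃ : a.1 ≤ b.1) :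
    ∃ i, w ≤ i ∧ i ≤ 0 ∧ ExtNe w i a b := by
  set r := (b.2 - a.2) % (1 - w)
  have hr₀ : 0 ≤ r := Int.emod_nonneg _ (by omega)
  have hr₁ : r < 1 - w := Int.emod_lt_of_pos _ (by omega)
  have hta : (1 - w) ∣ b.2 - r - a.2 := by
    convert (Int.dvd_self_sub_emod : (1 - w) ∣ b.2 - a.2 - r) using 1; ring
  refine ⟨r + w, by omega, by omega, (extNe_iff hw ha hb).2 (Or.inr ⟨b.2 - r, hta, ?_, ?_, ?_, ?_⟩)⟩
  · linarith [nonneg_of_dvd_of_neg_lt hta (by omega)]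
  · have : (1 - w) ∣ a.1 + w - (b.2 - r) := by
      convert Int.dvd_sub (Int.dvd_sub ha.2.2 (Int.dvd_refl _)) hta using 1; ring
    linarith [nonneg_of_dvd_of_neg_lt this (by omega)]
  · have : (1 - w) ∣ b.1 - b.2 - a.1 + (b.2 - r) := by
      convert Int.dvd_add (Int.dvd_sub hb.2.2 ha.2.2) hta using 1; ring
    linarith [nonneg_of_dvd_of_neg_lt this (by omega)]
  · ring

theorem exists_extNe_iff_not_compatible (hw : w ≤ -1) (ha : Adm w a) (hb : Adm w b) :
    (∃ i, w ≤ i ∧ i ≤ 0 ∧ ExtNe w i a b) ↔ ¬Compatible a b := by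
  rw [not_compatible_iff ha.1 hb.1]
  constructor
  · rintro ⟨i, hi₁, hi₂, h⟩
    rcases (extNe_iff hw ha hb).1 h with ⟨t, -, h₁, h₂, h₃, rfl⟩ | ⟨t, -, h₁, h₂, h₃, rfl⟩ <;>
      omega
  · rintro (⟨h₁, h₂, h₃⟩ | ⟨h₁, h₂, h₃⟩)
    exacts [exists_extNe_of_meets_left hw ha hb h₁ h₂ h₃,
      exists_extNe_of_meets_right hw ha hb h₁ h₂ h₃]

namespace IsHomConfig

theorem not_extNe (hH : IsHomConfig w H) (hx : x ∈ H) (hy : y ∈ H) (hxy : x ≠ y)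
    {i : ℤ} (hwi : w ≤ i) (hi : i ≤ 0) : ¬ExtNe w i x y := by
  obtain ⟨hshifts, hends⟩ := (hH.2 y (hH.1 y hy)).1 hy
  rcases eq_or_lt_of_le hwi with rfl | hwi
  · exact (hends x hx hxy).2
  rcases eq_or_lt_of_le hi with rfl | hi
  · exact (hends x hx hxy).1
  · exact hshifts x hx i (by omega) (by omega)

theorem pairwise_compatible (hw : w ≤ -1) (hH : IsHomConfig w H) : H.Pairwise Compatible := by
  intro x hx y hy hxy
  by_contra hcomp
  obtain ⟨i, hi₁, hi₂, he⟩ :=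
    (exists_extNe_iff_not_compatible hw (hH.1 x hx) (hH.1 y hy)).2 hcomp
  exact hH.not_extNe hx hy hxy hi₁ hi₂ he

theorem mem_of_compatible (hw : w ≤ -1) (hH : IsHomConfig w H) {h : Arc} (hh : Adm w h)
    (hcomp : ∀ x ∈ H, x ≠ h → Compatible x h) : h ∈ H := by
  by_contra hnot
  have hno : ∀ x ∈ H, ∀ i, w ≤ i → i ≤ 0 → ¬ExtNe w i x h := fun x hx i hi₁ hi₂ he =>
    (exists_extNe_iff_not_compatible hw (hH.1 x hx) hh).1 ⟨i, hi₁, hi₂, he⟩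
      (hcomp x hx (ne_of_mem_of_not_mem hx hnot))
  exact hnot <| (hH.2 h hh).2
    ⟨fun x hx i hi₁ hi₂ => hno x hx i (by omega) (by omega),
      fun x hx _ => ⟨hno x hx 0 (by omega) le_rfl, hno x hx w le_rfl (by omega)⟩⟩

end IsHomConfig

def Covered (G : Set Arc) (v : ℤ) : Prop := ∃ b ∈ G, b.2 ≤ v ∧ v ≤ b.1

/-- No arc of `G` contains both `v - 1` and `v`, so `G` splits into the arcs left of `v`
and those right of it. -/
def IsCut (G : Set Arc) (v : ℤ) : Prop := ∀ b ∈ G, ¬(b.2 < v ∧ v ≤ b.1)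

open Classical in
noncomputable def uncovered (G : Set Arc) (p q : ℤ) : Finset ℤ :=
  (Ico p q).filter fun v => ¬Covered G v

theorem mem_uncovered {p q v : ℤ} : v ∈ uncovered G p q ↔ (p ≤ v ∧ v < q) ∧ ¬Covered G v := by
  simp [uncovered]

theorem card_uncovered_add {p q r : ℤ} (hpq : p ≤ q) (hqr : q ≤ r) :
    #(uncovered G p r) = #(uncovered G p q) + #(uncovered G q r) := by
  classical
  rw [uncovered, ← Ico_union_Ico_eq_Ico hpq hqr, filter_union,
    card_union_of_disjoint (disjoint_filter_filter (Ico_disjoint_Ico_consecutive p q r))]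
  rfl

theorem card_uncovered_mono {p q p' q' : ℤ} (hp : p ≤ p') (hq : q' ≤ q) :
    #(uncovered G p' q') ≤ #(uncovered G p q) := by
  classical
  exact card_le_card (filter_subset_filter _ (Ico_subset_Ico hp hq))

theorem IsCut.of_not_covered {v : ℤ} (h : ¬Covered G v) : IsCut G v :=
  fun b hb hbv => h ⟨b, hb, hbv.1.le, hbv.2⟩

theorem card_uncovered_eq_zero (hb : b ∈ G) : #(uncovered G b.2 (b.1 + 1)) = 0 := by
  refine card_eq_zero.2 (eq_empty_of_forall_notMem fun v hv => ?_)
  rw [mem_uncovered] at hv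
  exact hv.2 ⟨b, hb, hv.1.1, by omega⟩

theorem card_uncovered_eq_one {p : ℤ} (hp : ¬Covered G p) : #(uncovered G p (p + 1)) = 1 := by
  refine card_eq_one.2 ⟨p, eq_singleton_iff_unique_mem.2 ⟨mem_uncovered.2 ⟨by omega, hp⟩, ?_⟩⟩
  intro v hv
  rw [mem_uncovered] at hv
  omega

theorem isCut_add_one {p : ℤ} (hp : ¬Covered G p) : IsCut G (p + 1) :=
  fun b hb hbp => hp ⟨b, hb, by omega, by omega⟩

theorem IsCut.fst_add_one (hG : ∀ b ∈ G, b.2 < b.1) (hGc : G.Pairwise Compatible)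
    (hb : b ∈ G) (hcut : IsCut G b.2) : IsCut G (b.1 + 1) := by
  rintro c hc ⟨hc₂, hc₁⟩
  have hcb : c ≠ b := by rintro rfl; omega
  have := (compatible_iff (hG c hc) (hG b hb)).1 (hGc hc hb hcb)
  have := hcut c hc
  have := hG b hb
  omega

/-- Between two cuts, the covered vertices are tiled by the spans of the outermost arcs,
each of length divisible by `1 - w`. -/
theorem dvd_sub_card_uncovered (hG : ∀ b ∈ G, Adm w b) (hGc : G.Pairwise Compatible) {p q : ℤ}
    (hpq : p ≤ q) (hp : IsCut G p) (hq : IsCut G q) :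
    (1 - w) ∣ q - p - #(uncovered G p q) := by
  induction hn : (q - p).toNat using Nat.strong_induction_on generalizing p with
  | _ n ih =>
  rcases eq_or_lt_of_le hpq with rfl | hlt
  · simp [uncovered]
  by_cases hcov : Covered G p
  · obtain ⟨b, hb, hb₂, hb₁⟩ := hcov
    have hbp : b.2 = p := by
      by_contra; exact hp b hb ⟨by omega, hb₁⟩
    have hbq : b.1 < q := by
      by_contra; exact hq b hb ⟨by omega, by omega⟩
    have hcut : IsCut G (b.1 + 1) :=
      IsCut.fst_add_one (fun c hc => (hG c hc).1) hGc hb (hbp ▸ hp)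
    have := ih _ (by omega) (by omega) hcut rfl
    rw [card_uncovered_add (by omega : p ≤ b.1 + 1) (by omega), ← hbp, card_uncovered_eq_zero hb]
    convert Int.dvd_add (hG b hb).2.2 this using 1
    push_cast; ring
  · have := ih _ (by omega) (by omega) (isCut_add_one hcov) rfl
    rw [card_uncovered_add (by omega : p ≤ p + 1) (by omega), card_uncovered_eq_one hcov]
    convert this using 1
    push_cast; ring

theorem neg_le_card_uncovered (hG : ∀ b ∈ G, Adm w b) (hGc : G.Pairwise Compatible)
    (hz : Adm w z) (h₂ : IsCut G z.2) (h₁ : IsCut G z.1) :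
    -w ≤ #(uncovered G z.2 z.1) := by
  have hd : (1 - w) ∣ #(uncovered G z.2 z.1) + 1 := by
    convert Int.dvd_sub hz.2.2 (dvd_sub_card_uncovered hG hGc hz.1.le h₂ h₁) using 1; ring
  have := Int.le_of_dvd (by positivity) hd
  omega

namespace IsHomConfig

/-- Otherwise `(q, p)` would be an arc compatible with all of `H`, hence in `H`, while `q` is
uncovered. -/
theorem card_uncovered_ne (hw : w ≤ -1) (hH : IsHomConfig w H) (hGH : G ⊆ H) {p q : ℤ}
    (hpq : p < q) (hp : ¬Covered G p) (hq : ¬Covered G q)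
    (hout : ∀ b ∈ H, b ∉ G → b.1 < p ∨ q < b.2 ∨ (b.2 < p ∧ q < b.1)) :
    (#(uncovered G p q) : ℤ) ≠ -w := by
  intro hcard
  have hd := dvd_sub_card_uncovered (fun b hb => hH.1 b (hGH hb))
    ((hH.pairwise_compatible hw).mono hGH) hpq.le (.of_not_covered hp) (.of_not_covered hq)
  rw [hcard] at hd
  have hd' : (1 - w) ∣ q - p + 1 := by
    convert Int.dvd_add hd (Int.dvd_refl (1 - w)) using 1; ring
  have hz : Adm w (q, p) := ⟨hpq, by have := Int.le_of_dvd (by omega) hd'; dsimp; omega, hd'⟩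
  have hmem : (q, p) ∈ H := hH.mem_of_compatible hw hz fun x hx _ => by
    rw [compatible_iff (hH.1 x hx).1 hpq]
    by_cases hxG : x ∈ G
    · have hxp : ¬(x.2 ≤ p ∧ p ≤ x.1) := fun h => hp ⟨x, hxG, h⟩
      have hxq : ¬(x.2 ≤ q ∧ q ≤ x.1) := fun h => hq ⟨x, hxG, h⟩
      have := (hH.1 x hx).1
      dsimp; omega
    · have := hout x hx hxG
      dsimp; omega
  by_cases hzG : (q, p) ∈ G
  · exact hq ⟨_, hzG, hpq.le, le_rfl⟩
  · have := hout _ hmem hzG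
    dsimp at this; omega

/-- Among `-w + 1` uncovered vertices, the first and the last would bound exactly `-w` of
them, contradicting `card_uncovered_ne`. -/
theorem card_uncovered_le (hw : w ≤ -1) (hH : IsHomConfig w H) (hGH : G ⊆ H) {P Q : ℤ}
    (hout : ∀ b ∈ H, b ∉ G → b.1 < P ∨ Q ≤ b.2 ∨ (b.2 < P ∧ Q ≤ b.1)) :
    (#(uncovered G P Q) : ℤ) ≤ -w := by
  by_contra! hlt
  obtain ⟨q, hqU, hq⟩ := (uncovered G P Q).exists_card_filter_lt_eq (k := (-w).toNat) (by omega)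
  set L := (uncovered G P Q).filter (· < q)
  have hL : L.Nonempty := card_pos.1 (by omega)
  have hpL : L.min' hL ∈ L := min'_mem L hL
  have hLeq : uncovered G (L.min' hL) q = L := by
    ext v
    have := min'_le L v
    simp only [L, mem_filter, mem_uncovered] at hpL hqU this ⊢
    constructor
    · rintro ⟨⟨h₁, h₂⟩, h₃⟩
      exact ⟨⟨⟨by omega, by omega⟩, h₃⟩, h₂⟩
    · rintro h
      exact ⟨⟨this h, h.2⟩, h.1.2⟩
  simp only [L, mem_filter, mem_uncovered] at hpL hqU
  refine hH.card_uncovered_ne hw hGH hpL.2 hpL.1.2 hqU.2 (fun b hb hbG => ?_) ?_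
  · have := hout b hb hbG
    omega
  · rw [hLeq, hq]
    omega

end IsHomConfig

def children (H : Set Arc) (x : Arc) : Set Arc := {b | b ∈ H ∧ x.2 < b.2 ∧ b.1 < x.1}

theorem children_subset (H : Set Arc) (x : Arc) : children H x ⊆ H := fun _ hb => hb.1

theorem IsHomConfig.card_uncovered_children (hw : w ≤ -1) (hH : IsHomConfig w H)
    (hx : x ∈ H) : (#(uncovered (children H x) (x.2 + 1) x.1) : ℤ) = -w - 1 := by
  have hxa := hH.1 x hx
  have hd := dvd_sub_card_uncovered (fun b hb => hH.1 b hb.1)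
    ((hH.pairwise_compatible hw).mono (children_subset H x)) (p := x.2 + 1) (q := x.1)
    hxa.1 (fun b hb h => by have := hb.2; omega) (fun b hb h => by have := hb.2; omega)
  have hd' : (1 - w) ∣ #(uncovered (children H x) (x.2 + 1) x.1) + 2 := by
    convert Int.dvd_sub hxa.2.2 hd using 1; ring
  have hle := hH.card_uncovered_le hw (children_subset H x) (P := x.2 + 1) (Q := x.1)
    fun b hb hbx => by
      have hnest : ¬(x.2 < b.2 ∧ b.1 < x.1) := fun h => hbx ⟨hb, h⟩
      rcases eq_or_ne b x with rfl | hne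
      · omega
      · have := (compatible_iff (hH.1 b hb).1 hxa.1).1 (hH.pairwise_compatible hw hb hx hne)
        omega
  have := Int.le_of_dvd (by positivity) hd'
  by_contra hne
  have := Int.le_of_dvd (by omega) (Int.dvd_sub hd' (Int.dvd_refl _))
  omega

theorem mem_noOverarcIsolated_iff (hH : ∀ b ∈ H, b.2 < b.1) {v : ℤ} :
    v ∈ NoOverarcIsolated H ↔ ¬Covered H v := by
  constructor
  · rintro ⟨hiso, hover⟩ ⟨b, hb, h₂, h₁⟩
    have := hiso b hb
    exact hover b ⟨hb, by omega, by omega⟩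
  · intro h
    refine ⟨fun b hb => ?_, fun b hb => h ⟨b, hb.1, hb.2.1.le, hb.2.2.le⟩⟩
    have := hH b hb
    constructor <;> rintro rfl <;> exact h ⟨b, hb, by omega, by omega⟩

namespace IsHomConfig

theorem card_le_of_subset_noOverarcIsolated (hw : w ≤ -1) (hH : IsHomConfig w H) (F : Finset ℤ)
    (hF : ↑F ⊆ NoOverarcIsolated H) : (#F : ℤ) ≤ -w := by
  rcases F.eq_empty_or_nonempty with rfl | hne
  · simp only [card_empty, Nat.cast_zero]; omega
  calc (#F : ℤ) ≤ #(uncovered H (F.min' hne) (F.max' hne + 1)) := by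
        refine Nat.cast_le.2 (card_le_card fun v hv => mem_uncovered.2 ⟨?_, ?_⟩)
        · exact ⟨min'_le F v hv, Int.lt_add_one_of_le (le_max' F v hv)⟩
        · exact (mem_noOverarcIsolated_iff (fun b hb => (hH.1 b hb).1)).1 (hF hv)
    _ ≤ -w := hH.card_uncovered_le hw subset_rfl fun b hb hbH => absurd hb hbH

theorem noOverarcIsolated_finite (hw : w ≤ -1) (hH : IsHomConfig w H) :
    (NoOverarcIsolated H).Finite := by
  by_contra hinf
  obtain ⟨F, hF, hcard⟩ := Set.Infinite.exists_subset_card_eq hinf (1 - w).toNat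
  have := hH.card_le_of_subset_noOverarcIsolated hw F hF
  omega

theorem ncard_noOverarcIsolated_le (hw : w ≤ -1) (hH : IsHomConfig w H) :
    ((NoOverarcIsolated H).ncard : ℤ) ≤ -w := by
  have hfin := hH.noOverarcIsolated_finite hw
  rw [Set.ncard_eq_toFinset_card _ hfin]
  exact hH.card_le_of_subset_noOverarcIsolated hw _ (by simp)

end IsHomConfig

theorem card_uncovered_le_ncard (hH : ∀ b ∈ H, b.2 < b.1) (hfin : (NoOverarcIsolated H).Finite)
    (p q : ℤ) : #(uncovered H p q) ≤ (NoOverarcIsolated H).ncard := by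
  rw [Set.ncard_eq_toFinset_card _ hfin]
  exact card_le_card fun v hv =>
    hfin.mem_toFinset.2 ((mem_noOverarcIsolated_iff hH).2 (mem_uncovered.1 hv).2)

theorem not_extNe_of_not_covered (hw : w ≤ -1) (hx : Adm w x) (hz : Adm w z)
    (h₂ : ¬(x.2 ≤ z.2 ∧ z.2 ≤ x.1)) (h₁ : ¬(x.2 ≤ z.1 - 1 ∧ z.1 - 1 ≤ x.1)) {i : ℤ}
    (hi₁ : w + 1 ≤ i) (hi₂ : i ≤ 0) : ¬ExtNe w i x z := by
  rw [extNe_iff hw hx hz]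
  rintro (⟨t, -, h₃, h₄, h₅, rfl⟩ | ⟨t, -, h₃, h₄, h₅, rfl⟩) <;> omega

theorem IsLeftRiedtmann.ncard_noOverarcIsolated_ne (hw : w ≤ -1) (hH : IsHomConfig w H)
    (hR : IsLeftRiedtmann w H) : ((NoOverarcIsolated H).ncard : ℤ) ≠ -w := by
  intro hcard
  have hfin := hH.noOverarcIsolated_finite hw
  have harcs : ∀ b ∈ H, b.2 < b.1 := fun b hb => (hH.1 b hb).1
  set V := hfin.toFinset
  have hV : (#V : ℤ) = -w := by rw [← hcard, Set.ncard_eq_toFinset_card _ hfin]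
  have hne : V.Nonempty := card_pos.1 (by omega)
  have hunc : ∀ v ∈ V, ¬Covered H v := fun v hv =>
    (mem_noOverarcIsolated_iff harcs).1 (hfin.mem_toFinset.1 hv)
  have hUV : uncovered H (V.min' hne) (V.max' hne + 1) = V := by
    ext v
    rw [mem_uncovered]
    refine ⟨fun h => hfin.mem_toFinset.2 ((mem_noOverarcIsolated_iff harcs).2 h.2), fun hv => ?_⟩
    exact ⟨⟨min'_le V v hv, Int.lt_add_one_of_le (le_max' V v hv)⟩, hunc v hv⟩
  have hd := dvd_sub_card_uncovered hH.1 (hH.pairwise_compatible hw)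
    (Int.le_add_one (min'_le_max' V hne)) (.of_not_covered (hunc _ (min'_mem V hne)))
    (isCut_add_one (hunc _ (max'_mem V hne)))
  rw [hUV, hV] at hd
  have hd' : (1 - w) ∣ (V.max' hne + 1) - V.min' hne + 1 := by
    convert Int.dvd_add hd (Int.dvd_refl (1 - w)) using 1; ring
  have hz : Adm w (V.max' hne + 1, V.min' hne) :=
    ⟨Int.lt_add_one_of_le (min'_le_max' V hne),
      by have := Int.le_of_dvd (by have := min'_le_max' V hne; omega) hd'; dsimp; omega, hd'⟩
  obtain ⟨x, hx, i, hi₁, hi₂, hext⟩ := hR.2.2 _ hz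
  refine not_extNe_of_not_covered hw (hH.1 x hx) hz ?_ ?_ hi₁ hi₂ hext
  · exact fun h => hunc _ (min'_mem V hne) ⟨x, hx, h⟩
  · exact fun h => hunc _ (max'_mem V hne) ⟨x, hx, by simpa using h⟩

theorem exists_extNe_of_over_fst (hw : w ≤ -1) (hx : Adm w x) (hz : Adm w z)
    (h₁ : x.2 < z.1) (h₂ : z.1 ≤ x.1) {c : ℤ} (hc₀ : 0 ≤ c) (hc : c ≤ -w - 1)
    (hd : (1 - w) ∣ z.1 - x.2 - 1 - c) (h₃ : z.2 ≤ x.2 + 1 + c) :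
    ∃ i, w + 1 ≤ i ∧ i ≤ 0 ∧ ExtNe w i x z := by
  have ht : (1 - w) ∣ x.1 - (z.1 - w - 1 - c) := by
    convert Int.dvd_sub (Int.dvd_sub hx.2.2 hd) (Int.dvd_refl _) using 1; ring
  refine ⟨w + 1 + c, by omega, by omega,
    (extNe_iff hw hx hz).2 (Or.inl ⟨z.1 - w - 1 - c, ht, ?_, ?_, ?_, by ring⟩)⟩
  · linarith [nonneg_of_dvd_of_neg_lt hd (by omega)]
  · linarith [nonneg_of_dvd_of_neg_lt ht (by omega)]
  · have : (1 - w) ∣ z.1 - z.2 - (z.1 - w - 1 - c - x.2) := by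
      convert Int.dvd_sub (Int.dvd_sub hz.2.2 hd) (Int.dvd_refl _) using 1; ring
    linarith [nonneg_of_dvd_of_neg_lt this (by omega)]

theorem exists_extNe_of_over_snd (hw : w ≤ -1) (hy : Adm w y) (hz : Adm w z)
    (h₁ : y.2 < z.2) (h₂ : z.2 ≤ y.1) (h₃ : y.1 < z.1) {e : ℤ} (he₀ : 0 ≤ e) (he : e ≤ -w - 1)
    (hd : (1 - w) ∣ z.1 - y.1 - 1 - e) :
    ∃ i, w + 1 ≤ i ∧ i ≤ 0 ∧ ExtNe w i y z := by
  have ht : (1 - w) ∣ z.2 - 1 - e - y.2 := by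
    convert Int.dvd_add (Int.dvd_sub hd hz.2.2) hy.2.2 using 1; ring
  refine ⟨1 + e + w, by omega, by omega,
    (extNe_iff hw hy hz).2 (Or.inr ⟨z.2 - 1 - e, ht, ?_, ?_, ?_, by ring⟩)⟩
  · linarith [nonneg_of_dvd_of_neg_lt ht (by omega)]
  · have : (1 - w) ∣ y.1 + w - (z.2 - 1 - e) := by
      convert Int.dvd_sub (Int.dvd_sub hy.2.2 (Int.dvd_refl _)) ht using 1; ring
    linarith [nonneg_of_dvd_of_neg_lt this (by omega)]
  · linarith [nonneg_of_dvd_of_neg_lt hd (by omega)]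

/-- If `z.2` lies under an arc of `G`, the one reaching furthest right has a sharp `Ext` to
`z`; otherwise `z.2` is a cut and `neg_le_card_uncovered` contradicts `hcard`. -/
theorem exists_extNe_of_card_uncovered_le (hw : w ≤ -1) (hG : ∀ b ∈ G, Adm w b)
    (hGc : G.Pairwise Compatible) (hz : Adm w z) (hcut : IsCut G z.1) {lo : ℤ}
    (hlo : lo ≤ z.2) (hcard : (#(uncovered G lo z.1) : ℤ) ≤ -w - 1) :
    ∃ y ∈ G, ∃ i, w + 1 ≤ i ∧ i ≤ 0 ∧ ExtNe w i y z := by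
  have hz₁ := hz.1
  by_cases hstr : ∃ b ∈ G, b.2 < z.2 ∧ z.2 ≤ b.1
  · have hlt : ∀ b ∈ G, b.2 < z.2 → b.1 < z.1 := fun b hb hb₂ => by
      by_contra; exact hcut b hb ⟨by omega, by omega⟩
    obtain ⟨_, ⟨y, hy, ⟨hy₂, hy₁⟩, rfl⟩, hmax⟩ := Int.exists_greatest_of_bdd
      (P := fun r => ∃ b ∈ G, (b.2 < z.2 ∧ z.2 ≤ b.1) ∧ b.1 = r)
      ⟨z.1, fun _ ⟨b, hb, hbz, hr⟩ => hr ▸ (hlt b hb hbz.1).le⟩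
      (hstr.elim fun b ⟨hb, hbz⟩ => ⟨_, b, hb, hbz, rfl⟩)
    have hycut : IsCut G (y.1 + 1) := by
      rintro c hc ⟨hc₂, hc₁⟩
      by_cases hcz : c.2 < z.2
      · have := hmax c.1 ⟨c, hc, ⟨hcz, by omega⟩, rfl⟩
        omega
      · have hcy : c ≠ y := by rintro rfl; omega
        have := (compatible_iff (hG c hc).1 (hG y hy).1).1 (hGc hc hy hcy)
        omega
    have hd := dvd_sub_card_uncovered hG hGc (hlt y hy hy₂) hycut hcut
    have hmono := card_uncovered_mono (G := G) (show lo ≤ y.1 + 1 by omega) (le_refl z.1)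
    refine ⟨y, hy, exists_extNe_of_over_snd hw (hG y hy) hz hy₂ hy₁ (hlt y hy hy₂)
      (e := #(uncovered G (y.1 + 1) z.1)) (Nat.cast_nonneg _) (by omega) ?_⟩
    convert hd using 1; ring
  · push Not at hstr
    have := neg_le_card_uncovered hG hGc hz (fun b hb h => by have := hstr b hb h.1; omega) hcut
    have := card_uncovered_mono (G := G) hlo (le_refl z.1)
    omega

/-- Take `x` the shortest arc of `H` over `z.1` (if any); `exists_extNe_of_over_fst` either
gives a sharp `Ext` from `x` or puts `z.2` under `x`, and then the children of `x` play the
role of `H`. -/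
theorem IsHomConfig.exists_extNe (hw : w ≤ -1) (hH : IsHomConfig w H)
    (hfin : (NoOverarcIsolated H).Finite) (hS : ((NoOverarcIsolated H).ncard : ℤ) ≤ -w - 1)
    (hz : Adm w z) : ∃ x ∈ H, ∃ i, w + 1 ≤ i ∧ i ≤ 0 ∧ ExtNe w i x z := by
  have hHc := hH.pairwise_compatible hw
  by_cases hstr : ∃ b ∈ H, b.2 < z.1 ∧ z.1 ≤ b.1
  · obtain ⟨_, ⟨x, hx, ⟨hx₂, hx₁⟩, rfl⟩, hmin⟩ := Int.exists_least_of_bdd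
      (P := fun r => ∃ b ∈ H, (b.2 < z.1 ∧ z.1 ≤ b.1) ∧ b.1 - b.2 = r)
      ⟨0, fun _ ⟨b, _, hbz, hr⟩ => by omega⟩
      (hstr.elim fun b ⟨hb, hbz⟩ => ⟨_, b, hb, hbz, rfl⟩)
    have hGH := children_subset H x
    have hG : ∀ b ∈ children H x, Adm w b := fun b hb => hH.1 b (hGH hb)
    have hcut : IsCut (children H x) z.1 := fun b hb hbz => by
      have := hmin _ ⟨b, hb.1, hbz, rfl⟩
      have := hb.2
      omega
    have hd := dvd_sub_card_uncovered hG (hHc.mono hGH) (Int.add_one_le_of_lt hx₂)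
      (fun b hb h => by have := hb.2; omega) hcut
    have hmono := card_uncovered_mono (G := children H x) (le_refl (x.2 + 1)) hx₁
    have htot := hH.card_uncovered_children hw hx
    by_cases h₃ : z.2 ≤ x.2 + 1 + #(uncovered (children H x) (x.2 + 1) z.1)
    · refine ⟨x, hx, exists_extNe_of_over_fst hw (hH.1 x hx) hz hx₂ hx₁ (Nat.cast_nonneg _)
        (by omega) ?_ h₃⟩
      convert hd using 1; ring
    · obtain ⟨y, hy, hext⟩ := exists_extNe_of_card_uncovered_le hw hG (hHc.mono hGH) hz hcut
        (by omega : x.2 + 1 ≤ z.2) (by omega)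
      exact ⟨y, hGH hy, hext⟩
  · push Not at hstr
    have := card_uncovered_le_ncard (fun b hb => (hH.1 b hb).1) hfin z.2 z.1
    exact exists_extNe_of_card_uncovered_le hw hH.1 hHc hz
      (fun b hb h => by have := hstr b hb h.1; omega) le_rfl (by omega)

/-- Theorem 4.3 ((1) ⇔ (3)): a `|w|`-Hom-configuration `H` is a left `|w|`-Riedtmann
configuration iff there are at most `|w| - 1` isolated vertices with no overarc. -/
theorem stmt7 (w : ℤ) (hw : w ≤ -1) (H : Set Arc) (hH : IsHomConfig w H) :
    IsLeftRiedtmann w H ↔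
      ((NoOverarcIsolated H).Finite ∧ ((NoOverarcIsolated H).ncard : ℤ) ≤ -w - 1) := by
  have hle := hH.ncard_noOverarcIsolated_le hw
  constructor
  · intro hR
    have := hR.ncard_noOverarcIsolated_ne hw hH
    exact ⟨hH.noOverarcIsolated_finite hw, by omega⟩
  · rintro ⟨hfin, hS⟩
    exact ⟨hH.1, fun x hx y hy hxy _ hi₁ hi₂ => hH.not_extNe hx hy hxy hi₁ hi₂,
      fun z hz => hH.exists_extNe hw hfin hS hz⟩

end SphericalArcs
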